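/- Let I, J, K be open intervals, let E, F, G be normalizable semideviations on I, J, K respectively, and let f : J × K → I be a differentiable function with ∂₁f ≥ 0, ∂₂f ≥ 0 and ∂₁f + ∂₂f > 0 everywhere on J × K. Then the following six assertions are equivalent (each inequality being required for all n ∈ ℕ, x ∈ Jⁿ, y ∈ Kⁿ, weight vectors λ, with f(x,y) := (f(x₁,y₁),…,f(xₙ,yₙ))): (i) LLD_E(f(x,y),λ) ≤ f(LLD_F(x,λ), LLD_G(y,λ)); (ii) LD_E(f(x,y),λ) ≤ f(LD_F(x,λ), LD_G(y,λ)); (iii) UD_E(f(x,y),λ) ≤ f(UD_F(x,λ), UD_G(y,λ)); (iv) UUD_E(f(x,y),λ) ≤ f(UUD_F(x,λ), UUD_G(y,λ)); (v) LLD_E(f(x,y),λ) ≤ f(UUD_F(x,λ), UUD_G(y,λ)); (vi) for all p, u ∈ J and q, v ∈ K, E*(f(p,q), f(u,v)) ≤ ∂₁f(u,v)·F*(p,u) + ∂₂f(u,v)·G*(q,v). -/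

import Mathlib

/-!
Dividing `e(y) = ∑ λᵢ E(xᵢ, y)` by `-∂₂E(y, y) > 0` does not change its sign and turns it into
`∑ λᵢ E*(xᵢ, y)`. Summing (vi) with the weights therefore shows that `e_E(f(u, v))` is `≤ 0`
(resp. `< 0`) as soon as `e_F(u)` and `e_G(v)` are. Each of the four means is pinned down by the
sign of `e` on either side of it, so this transfers to the means, using that `f` is continuous
and nondecreasing in each variable (and the intermediate value theorem along a segment for the
two upper means).

Conversely, for two points and the weights `(t, 1 - t)` each of the four means is
`b + t E*(a, b) + o(t)` as `t → 0⁺`, because `∂₂E(b, b) < 0`. The inequality between the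
mean of `(f(p, q), f(u, v))` and `f` of the means of `(p, u)` and `(q, v)` is an equality at
`t = 0`, so the right derivatives at `t = 0` compare, and by the chain rule this is (vi).
-/

open Set Filter Topology

/-- The weighted sum `e(y) = λ₁E(x₁,y)+⋯+λₙE(xₙ,y)`. -/
noncomputable def eFun (E : ℝ → ℝ → ℝ) {n : ℕ} (x lam : Fin n → ℝ) (y : ℝ) : ℝ :=
  ∑ i, lam i * E (x i) y

/-- Lower semideviation mean `LLD_E(x,λ) = inf {y ∈ I : e(y) ≤ 0}`. -/
noncomputable def LLD (I : Set ℝ) (E : ℝ → ℝ → ℝ) {n : ℕ} (x lam : Fin n → ℝ) : ℝ :=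
  sInf {y : ℝ | y ∈ I ∧ eFun E x lam y ≤ 0}

/-- Upper semideviation mean `UUD_E(x,λ) = sup {y ∈ I : e(y) ≥ 0}`. -/
noncomputable def UUD (I : Set ℝ) (E : ℝ → ℝ → ℝ) {n : ℕ} (x lam : Fin n → ℝ) : ℝ :=
  sSup {y : ℝ | y ∈ I ∧ 0 ≤ eFun E x lam y}

/-- `LD_E(x,λ) = inf {y ∈ I : e(y) < 0}`. -/
noncomputable def LD (I : Set ℝ) (E : ℝ → ℝ → ℝ) {n : ℕ} (x lam : Fin n → ℝ) : ℝ :=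
  sInf {y : ℝ | y ∈ I ∧ eFun E x lam y < 0}

/-- `UD_E(x,λ) = sup {y ∈ I : e(y) > 0}`. -/
noncomputable def UD (I : Set ℝ) (E : ℝ → ℝ → ℝ) {n : ℕ} (x lam : Fin n → ℝ) : ℝ :=
  sSup {y : ℝ | y ∈ I ∧ 0 < eFun E x lam y}

/-- A weight vector: nonnegative entries with positive sum. -/
def IsWeight {n : ℕ} (lam : Fin n → ℝ) : Prop :=
  (∀ i, 0 ≤ lam i) ∧ 0 < ∑ i, lam i

/-- `E` is a semideviation on `I`: for distinct `x, y ∈ I` the sign of `E x y`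
coincides with the sign of `x - y`. -/
def IsSemideviation (I : Set ℝ) (E : ℝ → ℝ → ℝ) : Prop :=
  ∀ x ∈ I, ∀ y ∈ I, x ≠ y → Real.sign (E x y) = Real.sign (x - y)

/-- `E` is a normalizable semideviation on `I`, with `d x = ∂₂E(x,x)`. -/
def IsNormalizable (I : Set ℝ) (E : ℝ → ℝ → ℝ) (d : ℝ → ℝ) : Prop :=
  IsSemideviation I E ∧
  (∀ x ∈ I, ContinuousOn (fun y => E x y) I) ∧
  (∀ x ∈ I, HasDerivWithinAt (fun y => E x y) (d x) I x) ∧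
  (∀ x ∈ I, d x < 0) ∧
  ContinuousOn d I

/-- The normalization `E*(x,y) = E(x,y)/(-∂₂E(y,y))`. -/
noncomputable def nrm (E : ℝ → ℝ → ℝ) (d : ℝ → ℝ) (x y : ℝ) : ℝ :=
  E x y / (-(d y))


namespace IsSemideviation

variable {I : Set ℝ} {E : ℝ → ℝ → ℝ} {x y : ℝ}

theorem pos_of_lt (hE : IsSemideviation I E) (hx : x ∈ I) (hy : y ∈ I) (h : y < x) :
    0 < E x y := by
  have hs := hE x hx y hy h.ne'
  rw [Real.sign_of_pos (sub_pos.2 h)] at hs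
  have hne : E x y ≠ 0 := fun h0 => by simp [h0] at hs
  simpa [hs] using Real.sign_mul_pos_of_ne_zero _ hne

theorem neg_of_lt (hE : IsSemideviation I E) (hx : x ∈ I) (hy : y ∈ I) (h : x < y) :
    E x y < 0 := by
  have hs := hE x hx y hy h.ne
  rw [Real.sign_of_neg (sub_neg.2 h)] at hs
  have hne : E x y ≠ 0 := fun h0 => by simp [h0] at hs
  simpa [hs] using Real.sign_mul_pos_of_ne_zero _ hne

theorem apply_self_eq_zero (hE : IsSemideviation I E) (hIo : IsOpen I) (hx : x ∈ I)
    (hc : ContinuousAt (E x) x) : E x x = 0 := by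
  have hI : ∀ᶠ y in 𝓝 x, y ∈ I := hIo.mem_nhds hx
  refine le_antisymm (le_of_tendsto (hc.tendsto.mono_left (nhdsWithin_le_nhds (s := Ioi x))) ?_)
    (ge_of_tendsto (hc.tendsto.mono_left (nhdsWithin_le_nhds (s := Iio x))) ?_)
  · filter_upwards [nhdsWithin_le_nhds hI, self_mem_nhdsWithin] with y hy hxy
    exact (hE.neg_of_lt hx hy hxy).le
  · filter_upwards [nhdsWithin_le_nhds hI, self_mem_nhdsWithin] with y hy hxy
    exact (hE.pos_of_lt hx hy hxy).le

theorem neg (hE : IsSemideviation I E) :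
    IsSemideviation (Neg.neg ⁻¹' I) (fun x y => -E (-x) (-y)) := by
  intro x hx y hy hxy
  rw [Real.sign_neg, hE (-x) hx (-y) hy (neg_injective.ne hxy), ← Real.sign_neg]
  ring_nf

end IsSemideviation

theorem IsWeight.exists_pos {n : ℕ} {lam : Fin n → ℝ} (hlam : IsWeight lam) :
    ∃ i, 0 < lam i := by
  simpa using Finset.exists_lt_of_sum_lt (f := 0) (g := lam) (s := Finset.univ)
    (by simpa using hlam.2)

theorem isWeight_pair {t : ℝ} (h₀ : 0 ≤ t) (h₁ : t ≤ 1) : IsWeight ![t, 1 - t] :=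
  ⟨Fin.forall_fin_two.2 ⟨h₀, sub_nonneg.2 h₁⟩, by simp⟩

theorem eFun_pair (E : ℝ → ℝ → ℝ) (a b t y : ℝ) :
    eFun E ![a, b] ![t, 1 - t] y = t * E a y + (1 - t) * E b y := by
  simp [eFun, Fin.sum_univ_two]

section eFun

variable {I : Set ℝ} {E : ℝ → ℝ → ℝ} {n : ℕ} {x lam : Fin n → ℝ} {y : ℝ}

theorem eFun_pos_of_forall_lt (hE : IsSemideviation I E) (hx : ∀ i, x i ∈ I)
    (hlam : IsWeight lam) (hy : y ∈ I) (h : ∀ i, y < x i) : 0 < eFun E x lam y := by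
  obtain ⟨j, hj⟩ := hlam.exists_pos
  exact Finset.sum_pos' (fun i _ => mul_nonneg (hlam.1 i) (hE.pos_of_lt (hx i) hy (h i)).le)
    ⟨j, Finset.mem_univ j, mul_pos hj (hE.pos_of_lt (hx j) hy (h j))⟩

theorem eFun_neg_of_forall_lt (hE : IsSemideviation I E) (hx : ∀ i, x i ∈ I)
    (hlam : IsWeight lam) (hy : y ∈ I) (h : ∀ i, x i < y) : eFun E x lam y < 0 := by
  obtain ⟨j, hj⟩ := hlam.exists_pos
  exact Finset.sum_neg'
    (fun i _ => mul_nonpos_of_nonneg_of_nonpos (hlam.1 i) (hE.neg_of_lt (hx i) hy (h i)).le)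
    ⟨j, Finset.mem_univ j, mul_neg_of_pos_of_neg hj (hE.neg_of_lt (hx j) hy (h j))⟩

theorem exists_le_of_eFun_nonneg (hE : IsSemideviation I E) (hx : ∀ i, x i ∈ I)
    (hlam : IsWeight lam) (hy : y ∈ I) (h : 0 ≤ eFun E x lam y) : ∃ i, y ≤ x i := by
  by_contra! hlt
  exact (eFun_neg_of_forall_lt hE hx hlam hy hlt).not_ge h

theorem continuousOn_eFun (hE : ∀ x ∈ I, ContinuousOn (E x) I) (hx : ∀ i, x i ∈ I) :
    ContinuousOn (eFun E x lam) I :=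
  continuousOn_finsetSum _ fun i _ => continuousOn_const.mul (hE (x i) (hx i))

end eFun

section SignChange

variable {I : Set ℝ} {g : ℝ → ℝ} {lo hi : ℝ}

theorem csInf_mem_Icc_of_Ioo_subset {S : Set ℝ} {u : ℝ} (hu : hi < u) (hsub : Ioo hi u ⊆ S)
    (hlo : lo ∈ lowerBounds S) : sInf S ∈ Icc lo hi :=
  ⟨le_csInf ((nonempty_Ioo.2 hu).mono hsub) hlo,
    csInf_Ioo hu ▸ csInf_le_csInf ⟨lo, hlo⟩ (nonempty_Ioo.2 hu) hsub⟩

theorem csSup_mem_Icc_of_Ioo_subset {S : Set ℝ} {l : ℝ} (hl : l < lo) (hsub : Ioo l lo ⊆ S)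
    (hhi : hi ∈ upperBounds S) : sSup S ∈ Icc lo hi :=
  ⟨csSup_Ioo hl ▸ csSup_le_csSup ⟨hi, hhi⟩ (nonempty_Ioo.2 hl) hsub,
    csSup_le ((nonempty_Ioo.2 hl).mono hsub) hhi⟩

theorem setOf_neg_subset_setOf_nonpos : {y | y ∈ I ∧ g y < 0} ⊆ {y | y ∈ I ∧ g y ≤ 0} :=
  fun _ hy => ⟨hy.1, hy.2.le⟩

theorem setOf_pos_subset_setOf_nonneg : {y | y ∈ I ∧ 0 < g y} ⊆ {y | y ∈ I ∧ 0 ≤ g y} :=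
  fun _ hy => ⟨hy.1, hy.2.le⟩

theorem mem_lowerBounds_setOf_nonpos (hpos : ∀ y ∈ I, y < lo → 0 < g y) :
    lo ∈ lowerBounds {y | y ∈ I ∧ g y ≤ 0} :=
  fun y hy => not_lt.1 fun h => (hpos y hy.1 h).not_ge hy.2

theorem mem_upperBounds_setOf_nonneg (hneg : ∀ y ∈ I, hi < y → g y < 0) :
    hi ∈ upperBounds {y | y ∈ I ∧ 0 ≤ g y} :=
  fun y hy => not_lt.1 fun h => (hneg y hy.1 h).not_ge hy.2

theorem exists_Ioo_subset_setOf_neg (hIo : IsOpen I) (hhi : hi ∈ I)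
    (hneg : ∀ y ∈ I, hi < y → g y < 0) : ∃ u, hi < u ∧ Ioo hi u ⊆ {y | y ∈ I ∧ g y < 0} := by
  obtain ⟨u, hu, hsub⟩ := exists_Ico_subset_of_mem_nhds (hIo.mem_nhds hhi) ⟨hi + 1, by linarith⟩
  exact ⟨u, hu, fun y hy =>
    ⟨hsub (Ioo_subset_Ico_self hy), hneg y (hsub (Ioo_subset_Ico_self hy)) hy.1⟩⟩

theorem exists_Ioo_subset_setOf_pos (hIo : IsOpen I) (hlo : lo ∈ I)
    (hpos : ∀ y ∈ I, y < lo → 0 < g y) : ∃ l, l < lo ∧ Ioo l lo ⊆ {y | y ∈ I ∧ 0 < g y} := by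
  obtain ⟨l, hl, hsub⟩ := exists_Ioc_subset_of_mem_nhds (hIo.mem_nhds hlo) ⟨lo - 1, by linarith⟩
  exact ⟨l, hl, fun y hy =>
    ⟨hsub (Ioo_subset_Ioc_self hy), hpos y (hsub (Ioo_subset_Ioc_self hy)) hy.2⟩⟩

end SignChange

section Means

variable {I : Set ℝ} {E : ℝ → ℝ → ℝ} {n : ℕ} {x lam : Fin n → ℝ} {lo hi z : ℝ}

theorem means_mem_Icc (hIo : IsOpen I) (hlo : lo ∈ I) (hhi : hi ∈ I)
    (hpos : ∀ y ∈ I, y < lo → 0 < eFun E x lam y) (hneg : ∀ y ∈ I, hi < y → eFun E x lam y < 0) :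
    LLD I E x lam ∈ Icc lo hi ∧ LD I E x lam ∈ Icc lo hi ∧
      UD I E x lam ∈ Icc lo hi ∧ UUD I E x lam ∈ Icc lo hi := by
  obtain ⟨u, hu, hsubu⟩ := exists_Ioo_subset_setOf_neg hIo hhi hneg
  obtain ⟨l, hl, hsubl⟩ := exists_Ioo_subset_setOf_pos hIo hlo hpos
  have hlo' := mem_lowerBounds_setOf_nonpos hpos
  have hhi' := mem_upperBounds_setOf_nonneg hneg
  exact ⟨csInf_mem_Icc_of_Ioo_subset hu (hsubu.trans setOf_neg_subset_setOf_nonpos) hlo',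
    csInf_mem_Icc_of_Ioo_subset hu hsubu fun _ hy => hlo' (setOf_neg_subset_setOf_nonpos hy),
    csSup_mem_Icc_of_Ioo_subset hl hsubl fun _ hy => hhi' (setOf_pos_subset_setOf_nonneg hy),
    csSup_mem_Icc_of_Ioo_subset hl (hsubl.trans setOf_pos_subset_setOf_nonneg) hhi'⟩

theorem exists_eFun_sign_bounds (hE : IsSemideviation I E) (hx : ∀ i, x i ∈ I)
    (hlam : IsWeight lam) : ∃ lo ∈ I, ∃ hi ∈ I,
      (∀ y ∈ I, y < lo → 0 < eFun E x lam y) ∧ (∀ y ∈ I, hi < y → eFun E x lam y < 0) := by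
  have : Nonempty (Fin n) := ⟨hlam.exists_pos.choose⟩
  obtain ⟨i, hi⟩ := Finite.exists_min x
  obtain ⟨j, hj⟩ := Finite.exists_max x
  exact ⟨x i, hx i, x j, hx j,
    fun y hy h => eFun_pos_of_forall_lt hE hx hlam hy fun k => h.trans_le (hi k),
    fun y hy h => eFun_neg_of_forall_lt hE hx hlam hy fun k => (hj k).trans_lt h⟩

variable (hIo : IsOpen I) (hE : IsSemideviation I E) (hx : ∀ i, x i ∈ I) (hlam : IsWeight lam)

include hE hx hlam

theorem LLD_le (hz : z ∈ I) (hez : eFun E x lam z ≤ 0) : LLD I E x lam ≤ z := by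
  obtain ⟨lo, -, -, -, hpos, -⟩ := exists_eFun_sign_bounds hE hx hlam
  exact csInf_le ⟨lo, mem_lowerBounds_setOf_nonpos hpos⟩ ⟨hz, hez⟩

theorem LD_le (hz : z ∈ I) (hez : eFun E x lam z < 0) : LD I E x lam ≤ z := by
  obtain ⟨lo, -, -, -, hpos, -⟩ := exists_eFun_sign_bounds hE hx hlam
  exact csInf_le
    ⟨lo, fun _ hy => mem_lowerBounds_setOf_nonpos hpos (setOf_neg_subset_setOf_nonpos hy)⟩
    ⟨hz, hez⟩

theorem eFun_nonpos_of_UD_lt (hz : z ∈ I) (h : UD I E x lam < z) : eFun E x lam z ≤ 0 := by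
  obtain ⟨-, -, hi, -, -, hneg⟩ := exists_eFun_sign_bounds hE hx hlam
  exact le_of_not_gt fun hez =>
    h.not_ge (le_csSup
      ⟨hi, fun _ hy => mem_upperBounds_setOf_nonneg hneg (setOf_pos_subset_setOf_nonneg hy)⟩
      ⟨hz, hez⟩)

theorem eFun_neg_of_UUD_lt (hz : z ∈ I) (h : UUD I E x lam < z) : eFun E x lam z < 0 := by
  obtain ⟨-, -, hi, -, -, hneg⟩ := exists_eFun_sign_bounds hE hx hlam
  exact lt_of_not_ge fun hez =>
    h.not_ge (le_csSup ⟨hi, mem_upperBounds_setOf_nonneg hneg⟩ ⟨hz, hez⟩)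

include hIo

theorem means_mem (hI : I.OrdConnected) :
    LLD I E x lam ∈ I ∧ LD I E x lam ∈ I ∧ UD I E x lam ∈ I ∧ UUD I E x lam ∈ I := by
  obtain ⟨lo, hlo, hi, hhi, hpos, hneg⟩ := exists_eFun_sign_bounds hE hx hlam
  obtain ⟨h₁, h₂, h₃, h₄⟩ := means_mem_Icc hIo hlo hhi hpos hneg
  exact ⟨hI.out hlo hhi h₁, hI.out hlo hhi h₂, hI.out hlo hhi h₃, hI.out hlo hhi h₄⟩

theorem UD_le (h : ∀ y ∈ I, 0 < eFun E x lam y → y ≤ z) : UD I E x lam ≤ z := by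
  obtain ⟨lo, hlo, -, -, hpos, -⟩ := exists_eFun_sign_bounds hE hx hlam
  obtain ⟨l, hl, hsub⟩ := exists_Ioo_subset_setOf_pos hIo hlo hpos
  exact csSup_le ((nonempty_Ioo.2 hl).mono hsub) fun y hy => h y hy.1 hy.2

theorem UUD_le (h : ∀ y ∈ I, 0 ≤ eFun E x lam y → y ≤ z) : UUD I E x lam ≤ z := by
  obtain ⟨lo, hlo, -, -, hpos, -⟩ := exists_eFun_sign_bounds hE hx hlam
  obtain ⟨l, hl, hsub⟩ := exists_Ioo_subset_setOf_pos hIo hlo hpos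
  exact csSup_le ((nonempty_Ioo.2 hl).mono (hsub.trans setOf_pos_subset_setOf_nonneg))
    fun y hy => h y hy.1 hy.2

theorem exists_seq_tendsto_LD : ∃ u : ℕ → ℝ, Tendsto u atTop (𝓝 (LD I E x lam)) ∧
    ∀ k, u k ∈ I ∧ eFun E x lam (u k) < 0 := by
  obtain ⟨lo, -, hi, hhi, hpos, hneg⟩ := exists_eFun_sign_bounds hE hx hlam
  obtain ⟨u, hu, hsub⟩ := exists_Ioo_subset_setOf_neg hIo hhi hneg
  obtain ⟨s, -, hs, hsS⟩ := exists_seq_tendsto_sInf ((nonempty_Ioo.2 hu).mono hsub)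
    ⟨lo, fun _ hy => mem_lowerBounds_setOf_nonpos hpos (setOf_neg_subset_setOf_nonpos hy)⟩
  exact ⟨s, hs, hsS⟩

theorem eFun_LLD_nonpos (hI : I.OrdConnected) (hc : ∀ x ∈ I, ContinuousOn (E x) I) :
    eFun E x lam (LLD I E x lam) ≤ 0 := by
  obtain ⟨lo, -, hi, hhi, hpos, hneg⟩ := exists_eFun_sign_bounds hE hx hlam
  obtain ⟨u, hu, hsub⟩ := exists_Ioo_subset_setOf_neg hIo hhi hneg
  have hcont : ContinuousAt (eFun E x lam) (LLD I E x lam) :=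
    (continuousOn_eFun hc hx).continuousAt (hIo.mem_nhds (means_mem hIo hE hx hlam hI).1)
  exact hcont.continuousWithinAt.closure_le
    (csInf_mem_closure ((nonempty_Ioo.2 hu).mono (hsub.trans setOf_neg_subset_setOf_nonpos))
      ⟨lo, mem_lowerBounds_setOf_nonpos hpos⟩) continuousWithinAt_const fun y hy => hy.2

theorem LLD_le_UUD (hI : I.OrdConnected) : LLD I E x lam ≤ UUD I E x lam := by
  obtain ⟨hLLD, -, -, hUUD⟩ := means_mem hIo hE hx hlam hI
  by_contra! h
  have hmid : (UUD I E x lam + LLD I E x lam) / 2 ∈ I :=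
    hI.out hUUD hLLD ⟨by linarith, by linarith⟩
  have := LLD_le hE hx hlam hmid (eFun_neg_of_UUD_lt hE hx hlam hmid (by linarith)).le
  linarith

end Means

section TwoPoint

variable {I : Set ℝ} {E : ℝ → ℝ → ℝ} {a b d ε : ℝ}

/-- Near `b`, writing `E(b, y) = (y - b) D(y)` with `D = dslope (E b) b` (continuous at `b`,
`D(b) = d < 0`) reduces the claim to `t E(a, y) < (1 - t) (y - b) (-D(y))`, where
`E(a, y) ≈ E(a, b) = (E(a, b) / -d) (-D(b))`; away from `b` it follows by compactness of
`[b + η, a]`. -/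
theorem eventually_twoPoint_neg (hI : I.OrdConnected) (hIo : IsOpen I) (hE : IsSemideviation I E)
    (hc : ∀ x ∈ I, ContinuousOn (E x) I) (ha : a ∈ I) (hb : b ∈ I) (hd : HasDerivAt (E b) d b)
    (hd0 : d < 0) (hε : 0 < ε) :
    ∀ᶠ t in 𝓝[≥] (0 : ℝ), ∀ y ∈ I, b + t * (E a b / -d + ε) < y →
      t * E a y + (1 - t) * E b y < 0 := by
  set c := E a b / -d
  have hEab : E a b = c * -d := (div_mul_cancel₀ _ (neg_ne_zero.2 hd0.ne)).symm
  set D := dslope (E b) b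
  have hD : ∀ y, E b y = (y - b) * D y := fun y => by
    rw [← smul_eq_mul, sub_smul_dslope, hE.apply_self_eq_zero hIo hb ((hc b hb).continuousAt
      (hIo.mem_nhds hb)), sub_zero]
  have hDc : ContinuousAt D b := continuousAt_dslope_same.2 hd.differentiableAt
  have hDb : D b = d := by rw [show D b = dslope (E b) b b from rfl, dslope_same, hd.deriv]
  have hEa : ContinuousAt (E a) b := (hc a ha).continuousAt (hIo.mem_nhds hb)
  have hnear : ∀ᶠ y in 𝓝 b, D y < 0 ∧ E a y < (c + ε / 2) * -D y :=
    (hDc.eventually_lt continuousAt_const (by rwa [hDb])).and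
      (hEa.eventually_lt (continuousAt_const.mul hDc.neg) (by rw [hDb, hEab]; nlinarith))
  obtain ⟨η, hη, hball⟩ := Metric.eventually_nhds_iff.1 hnear
  have hfar : ∀ᶠ t in 𝓝 (0 : ℝ), ∀ y ∈ Icc (b + η) a, t * E a y + (1 - t) * E b y < 0 := by
    refine isCompact_Icc.eventually_forall_of_forall_eventually fun y hy => ?_
    have hyI : y ∈ I := hI.out hb ha ⟨by linarith [hy.1], hy.2⟩
    have hca := (hc a ha).continuousAt (hIo.mem_nhds hyI)
    have hcb := (hc b hb).continuousAt (hIo.mem_nhds hyI)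
    refine ContinuousAt.eventually_lt (f := fun z : ℝ × ℝ => z.1 * E a z.2 + (1 - z.1) * E b z.2)
      (by fun_prop) continuousAt_const ?_
    simpa using hE.neg_of_lt hb hyI (by linarith [hy.1])
  have hsmall : ∀ᶠ t in 𝓝 (0 : ℝ), t < 1 ∧ t * (c + ε) < ε / 2 ∧ -η < t * (c + ε) := by
    refine (continuousAt_id.eventually_lt continuousAt_const one_pos).and
      (((continuousAt_id.mul continuousAt_const).eventually_lt continuousAt_const ?_).and
      (continuousAt_const.eventually_lt (continuousAt_id.mul continuousAt_const) ?_)) <;>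
    simp <;> linarith
  filter_upwards [nhdsWithin_le_nhds hfar, nhdsWithin_le_nhds hsmall, self_mem_nhdsWithin]
    with t hfar ⟨ht1, htε, htη⟩ (ht0 : 0 ≤ t) y hy hyt
  rcases lt_or_ge y (b + η) with hyη | hyη
  · obtain ⟨hDy, hEay⟩ :=
      hball (show dist y b < η by rw [Real.dist_eq, abs_lt]; constructor <;> linarith)
    have h₁ : t * E a y ≤ t * ((c + ε / 2) * -D y) := mul_le_mul_of_nonneg_left hEay.le ht0
    have h₂ : (1 - t) * ((y - b) * D y) < (1 - t) * (t * (c + ε) * D y) :=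
      mul_lt_mul_of_pos_left (mul_lt_mul_of_neg_right (by linarith) hDy) (by linarith)
    have h₃ : t * (-D y) * (t * (c + ε) - ε / 2) ≤ 0 :=
      mul_nonpos_of_nonneg_of_nonpos (mul_nonneg ht0 (by linarith)) (by linarith)
    rw [hD y]
    linarith
  · rcases le_or_gt y a with hya | hya
    · exact hfar y ⟨hyη, hya⟩
    · exact add_neg_of_nonpos_of_neg
        (mul_nonpos_of_nonneg_of_nonpos ht0 (hE.neg_of_lt ha hy hya).le)
        (mul_neg_of_pos_of_neg (by linarith) (hE.neg_of_lt hb hy (by linarith)))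

/-- The mirror image of `eventually_twoPoint_neg`, obtained by applying it to `-E(-x, -y)`. -/
theorem eventually_twoPoint_pos (hI : I.OrdConnected) (hIo : IsOpen I) (hE : IsSemideviation I E)
    (hc : ∀ x ∈ I, ContinuousOn (E x) I) (ha : a ∈ I) (hb : b ∈ I) (hd : HasDerivAt (E b) d b)
    (hd0 : d < 0) (hε : 0 < ε) :
    ∀ᶠ t in 𝓝[≥] (0 : ℝ), ∀ y ∈ I, y < b + t * (E a b / -d - ε) →
      0 < t * E a y + (1 - t) * E b y := by
  have hd' : HasDerivAt (fun y => -E (-(-b)) (-y)) d (-b) := by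
    rw [neg_neg]
    exact (hd.comp_of_eq (-b) (hasDerivAt_neg (-b)) (neg_neg b).symm).neg.congr_deriv (by ring)
  have h := eventually_twoPoint_neg (I := Neg.neg ⁻¹' I)
    (hI.preimage_anti fun _ _ h => neg_le_neg h)
    (hIo.preimage continuous_neg) hE.neg
    (fun x hx => ((hc (-x) hx).comp continuousOn_neg fun _ hy => hy).neg)
    (a := -a) (by simpa using ha) (by simpa using hb) hd' hd0 hε
  filter_upwards [h] with t ht y hy hyt
  have key : -b + t * (-E (-(-a)) (-(-b)) / -d + ε) < -y := by
    have : b + t * (E a b / -d - ε) = -(-b + t * (-E a b / -d + ε)) := by ring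
    simp only [neg_neg]
    linarith
  have := ht (-y) (by simpa using hy) key
  simp only [neg_neg] at this
  linarith

theorem eventually_twoPoint_means_mem_Icc {dE : ℝ → ℝ} (hI : I.OrdConnected) (hIo : IsOpen I)
    (hE : IsNormalizable I E dE) (ha : a ∈ I) (hb : b ∈ I) (hε : 0 < ε) :
    ∀ᶠ t in 𝓝[≥] (0 : ℝ),
      let s := Icc (b + t * (nrm E dE a b - ε)) (b + t * (nrm E dE a b + ε))
      LLD I E ![a, b] ![t, 1 - t] ∈ s ∧ LD I E ![a, b] ![t, 1 - t] ∈ s ∧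
        UD I E ![a, b] ![t, 1 - t] ∈ s ∧ UUD I E ![a, b] ![t, 1 - t] ∈ s := by
  obtain ⟨hsd, hc, hder, hneg, -⟩ := hE
  have hd := (hder b hb).hasDerivAt (hIo.mem_nhds hb)
  have hmem : ∀ s, ∀ᶠ t in 𝓝[≥] (0 : ℝ), b + t * s ∈ I := fun s =>
    (((continuous_const.add (continuous_id.mul continuous_const)).tendsto' 0 b
      (by simp)).mono_left nhdsWithin_le_nhds).eventually_mem (hIo.mem_nhds hb)
  filter_upwards [eventually_twoPoint_neg hI hIo hsd hc ha hb hd (hneg b hb) hε,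
    eventually_twoPoint_pos hI hIo hsd hc ha hb hd (hneg b hb) hε, hmem (nrm E dE a b - ε),
    hmem (nrm E dE a b + ε)] with t hlt hgt hlo hhi
  exact means_mem_Icc hIo hlo hhi (fun y hy h => (eFun_pair E a b t y).symm ▸ hgt y hy h)
    (fun y hy h => (eFun_pair E a b t y).symm ▸ hlt y hy h)

end TwoPoint

theorem hasDerivWithinAt_of_eventually_mem_Icc {M : ℝ → ℝ} {b c : ℝ}
    (h : ∀ ε > 0, ∀ᶠ t in 𝓝[≥] (0 : ℝ), M t ∈ Icc (b + t * (c - ε)) (b + t * (c + ε))) :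
    M 0 = b ∧ HasDerivWithinAt M c (Ici 0) 0 := by
  have hM0 : M 0 = b := by simpa using (h 1 one_pos).self_of_nhdsWithin (mem_Ici.2 le_rfl)
  refine ⟨hM0, hasDerivWithinAt_iff_isLittleO.2 (Asymptotics.isLittleO_iff.2 fun ε hε => ?_)⟩
  filter_upwards [h ε hε, self_mem_nhdsWithin] with t ht (ht0 : 0 ≤ t)
  rw [hM0, Real.norm_eq_abs, Real.norm_eq_abs, sub_zero, abs_of_nonneg ht0, smul_eq_mul, abs_le]
  constructor <;> nlinarith [ht.1, ht.2]

theorem le_of_hasDerivWithinAt_Ici {g h : ℝ → ℝ} {g' h' x : ℝ}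
    (hg : HasDerivWithinAt g g' (Ici x) x) (hh : HasDerivWithinAt h h' (Ici x) x)
    (hx : g x = h x) (hle : ∀ᶠ t in 𝓝[>] x, g t ≤ h t) : g' ≤ h' := by
  refine le_of_tendsto_of_tendsto
    ((hasDerivWithinAt_iff_tendsto_slope' self_notMem_Ioi).1 (hg.mono Ioi_subset_Ici_self))
    ((hasDerivWithinAt_iff_tendsto_slope' self_notMem_Ioi).1 (hh.mono Ioi_subset_Ici_self)) ?_
  filter_upwards [hle, self_mem_nhdsWithin] with t ht (hxt : x < t)
  rw [slope_def_field, slope_def_field, hx]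
  exact div_le_div_of_nonneg_right (by linarith) (sub_pos.2 hxt).le

/-- `m(a, b; t, 1 - t) = b + t c(a, b) + o(t)` as `t → 0⁺`, for `a, b ∈ I`. -/
def HasTwoPointSlope (m : ∀ {n : ℕ}, (Fin n → ℝ) → (Fin n → ℝ) → ℝ) (I : Set ℝ)
    (c : ℝ → ℝ → ℝ) : Prop :=
  ∀ a ∈ I, ∀ b ∈ I, ∀ ε > 0, ∀ᶠ t in 𝓝[≥] (0 : ℝ),
    m ![a, b] ![t, 1 - t] ∈ Icc (b + t * (c a b - ε)) (b + t * (c a b + ε))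

section TwoPointSlope

variable {I : Set ℝ} {E : ℝ → ℝ → ℝ} {dE : ℝ → ℝ}

theorem hasTwoPointSlope_LLD (hI : I.OrdConnected) (hIo : IsOpen I) (hE : IsNormalizable I E dE) :
    HasTwoPointSlope (LLD I E) I (nrm E dE) := fun _ ha _ hb _ hε =>
  (eventually_twoPoint_means_mem_Icc hI hIo hE ha hb hε).mono fun _ h => h.1

theorem hasTwoPointSlope_LD (hI : I.OrdConnected) (hIo : IsOpen I) (hE : IsNormalizable I E dE) :
    HasTwoPointSlope (LD I E) I (nrm E dE) := fun _ ha _ hb _ hε =>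
  (eventually_twoPoint_means_mem_Icc hI hIo hE ha hb hε).mono fun _ h => h.2.1

theorem hasTwoPointSlope_UD (hI : I.OrdConnected) (hIo : IsOpen I) (hE : IsNormalizable I E dE) :
    HasTwoPointSlope (UD I E) I (nrm E dE) := fun _ ha _ hb _ hε =>
  (eventually_twoPoint_means_mem_Icc hI hIo hE ha hb hε).mono fun _ h => h.2.2.1

theorem hasTwoPointSlope_UUD (hI : I.OrdConnected) (hIo : IsOpen I) (hE : IsNormalizable I E dE) :
    HasTwoPointSlope (UUD I E) I (nrm E dE) := fun _ ha _ hb _ hε =>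
  (eventually_twoPoint_means_mem_Icc hI hIo hE ha hb hε).mono fun _ h => h.2.2.2

end TwoPointSlope

section Forward

variable {I J K : Set ℝ} {E F G : ℝ → ℝ → ℝ} {dE dF dG : ℝ → ℝ} {f f₁ f₂ : ℝ → ℝ → ℝ}

theorem nrm_le_of_means_le {mE mF mG : ∀ {n : ℕ}, (Fin n → ℝ) → (Fin n → ℝ) → ℝ}
    (hmE : HasTwoPointSlope mE I (nrm E dE)) (hmF : HasTwoPointSlope mF J (nrm F dF))
    (hmG : HasTwoPointSlope mG K (nrm G dG)) (hmap : ∀ u ∈ J, ∀ v ∈ K, f u v ∈ I)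
    (hdf : ∀ u ∈ J, ∀ v ∈ K, HasFDerivAt (fun p : ℝ × ℝ => f p.1 p.2)
      ((f₁ u v) • ContinuousLinearMap.fst ℝ ℝ ℝ
        + (f₂ u v) • ContinuousLinearMap.snd ℝ ℝ ℝ) (u, v))
    (h : ∀ (n : ℕ) (x y lam : Fin n → ℝ), (∀ i, x i ∈ J) → (∀ i, y i ∈ K) → IsWeight lam →
      mE (fun i => f (x i) (y i)) lam ≤ f (mF x lam) (mG y lam)) :
    ∀ p ∈ J, ∀ u ∈ J, ∀ q ∈ K, ∀ v ∈ K,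
      nrm E dE (f p q) (f u v) ≤ f₁ u v * nrm F dF p u + f₂ u v * nrm G dG q v := by
  intro p hp u hu q hq v hv
  obtain ⟨hE0, hEd⟩ := hasDerivWithinAt_of_eventually_mem_Icc
    (hmE _ (hmap p hp q hq) _ (hmap u hu v hv))
  obtain ⟨hF0, hFd⟩ := hasDerivWithinAt_of_eventually_mem_Icc (hmF p hp u hu)
  obtain ⟨hG0, hGd⟩ := hasDerivWithinAt_of_eventually_mem_Icc (hmG q hq v hv)
  have hfd := (hdf u hu v hv).comp_hasDerivWithinAt_of_eq (x := 0) (hFd.prodMk hGd)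
    (by rw [hF0, hG0])
  have hvec : (fun i => f (![p, u] i) (![q, v] i)) = ![f p q, f u v] := by
    ext i; fin_cases i <;> rfl
  have hle := le_of_hasDerivWithinAt_Ici hEd hfd
    (by simp only [Function.comp_apply, hE0, hF0, hG0]) <| by
    filter_upwards [Ioo_mem_nhdsGT one_pos] with t ht
    simpa [hvec] using h 2 ![p, u] ![q, v] ![t, 1 - t] (Fin.forall_fin_two.2 ⟨hp, hu⟩)
      (Fin.forall_fin_two.2 ⟨hq, hv⟩) (isWeight_pair ht.1.le ht.2.le)
  simpa using hle

end Forward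

section Operation

variable {J K : Set ℝ} {f : ℝ → ℝ → ℝ} {f₁ f₂ : ℝ → ℝ → ℝ}

theorem hasDerivAt_left_of_hasFDerivAt {a b α β : ℝ}
    (h : HasFDerivAt (fun p : ℝ × ℝ => f p.1 p.2)
      (α • ContinuousLinearMap.fst ℝ ℝ ℝ + β • ContinuousLinearMap.snd ℝ ℝ ℝ) (a, b)) :
    HasDerivAt (fun s => f s b) α a := by
  refine (h.comp_hasDerivAt a ((hasDerivAt_id a).prodMk (hasDerivAt_const a b))).congr_deriv ?_
  simp

theorem hasDerivAt_right_of_hasFDerivAt {a b α β : ℝ}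
    (h : HasFDerivAt (fun p : ℝ × ℝ => f p.1 p.2)
      (α • ContinuousLinearMap.fst ℝ ℝ ℝ + β • ContinuousLinearMap.snd ℝ ℝ ℝ) (a, b)) :
    HasDerivAt (fun s => f a s) β b := by
  refine (h.comp_hasDerivAt b ((hasDerivAt_const b a).prodMk (hasDerivAt_id b))).congr_deriv ?_
  simp

theorem monotoneOn_of_hasDerivAt_nonneg_of_isOpen {g g' : ℝ → ℝ} (hJ : J.OrdConnected)
    (hJo : IsOpen J) (hg : ∀ x ∈ J, HasDerivAt g (g' x) x) (hg' : ∀ x ∈ J, 0 ≤ g' x) :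
    MonotoneOn g J :=
  monotoneOn_of_hasDerivWithinAt_nonneg hJ.convex
    (fun x hx => (hg x hx).continuousAt.continuousWithinAt)
    (by rw [hJo.interior_eq]; exact fun x hx => (hg x hx).hasDerivWithinAt)
    (by rwa [hJo.interior_eq])

variable (hJ : J.OrdConnected) (hK : K.OrdConnected)
  (hdf : ∀ u ∈ J, ∀ v ∈ K, HasFDerivAt (fun p : ℝ × ℝ => f p.1 p.2)
      ((f₁ u v) • ContinuousLinearMap.fst ℝ ℝ ℝ
        + (f₂ u v) • ContinuousLinearMap.snd ℝ ℝ ℝ) (u, v))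
include hJ hK hdf

theorem exists_gt_gt_apply_eq_of_segment {u v P Q z : ℝ} (hu : u ∈ J) (hv : v ∈ K) (hP : P ∈ J)
    (hQ : Q ∈ K) (huP : u < P) (hvQ : v < Q) (hz : f u v < z) (hzP : z ≤ f P Q) :
    ∃ u' ∈ J, ∃ v' ∈ K, u < u' ∧ v < v' ∧ f u' v' = z := by
  have hγ : ∀ s ∈ Icc (0 : ℝ) 1, u + s * (P - u) ∈ J ∧ v + s * (Q - v) ∈ K := fun s hs =>
    ⟨hJ.convex.add_smul_sub_mem hu hP hs, hK.convex.add_smul_sub_mem hv hQ hs⟩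
  have hcont : ContinuousOn (fun s => f (u + s * (P - u)) (v + s * (Q - v))) (Icc 0 1) :=
    fun s hs => ((hdf _ (hγ s hs).1 _ (hγ s hs).2).continuousAt.comp
      (f := fun s => (u + s * (P - u), v + s * (Q - v))) (by fun_prop)).continuousWithinAt
  obtain ⟨s, hs, hfs⟩ := intermediate_value_Icc zero_le_one hcont ⟨by simpa using hz.le, by simpa⟩
  have hs0 : 0 < s := lt_of_le_of_ne hs.1 fun h => by subst h; simp at hfs; linarith
  exact ⟨_, (hγ s hs).1, _, (hγ s hs).2, by nlinarith, by nlinarith, hfs⟩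

variable (hJo : IsOpen J) (hKo : IsOpen K)
include hJo hKo

theorem apply_le_apply_of_le (hf₁ : ∀ u ∈ J, ∀ v ∈ K, 0 ≤ f₁ u v)
    (hf₂ : ∀ u ∈ J, ∀ v ∈ K, 0 ≤ f₂ u v)
    {u u' v v' : ℝ} (hu : u ∈ J) (hu' : u' ∈ J) (hv : v ∈ K) (hv' : v' ∈ K) (huu : u ≤ u')
    (hvv : v ≤ v') : f u v ≤ f u' v' :=
  calc f u v ≤ f u' v :=
        monotoneOn_of_hasDerivAt_nonneg_of_isOpen hJ hJo
          (fun s hs => hasDerivAt_left_of_hasFDerivAt (hdf s hs v hv)) (fun s hs => hf₁ s hs v hv)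
          hu hu' huu
    _ ≤ f u' v' :=
        monotoneOn_of_hasDerivAt_nonneg_of_isOpen hK hKo
          (fun s hs => hasDerivAt_right_of_hasFDerivAt (hdf u' hu' s hs))
          (fun s hs => hf₂ u' hu' s hs) hv hv' hvv

theorem exists_gt_gt_apply_eq (hf₁ : ∀ u ∈ J, ∀ v ∈ K, 0 ≤ f₁ u v)
    (hf₂ : ∀ u ∈ J, ∀ v ∈ K, 0 ≤ f₂ u v) {u v p q z : ℝ} (hu : u ∈ J) (hv : v ∈ K) (hp : p ∈ J)
    (hq : q ∈ K) (hz : f u v < z) (hzp : z ≤ f p q) :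
    ∃ u' ∈ J, ∃ v' ∈ K, u < u' ∧ v < v' ∧ f u' v' = z := by
  obtain ⟨P, hP, hPJ⟩ := Eventually.exists_gt (p := (· ∈ J)) (hJo.mem_nhds (max_rec' (· ∈ J) hu hp))
  obtain ⟨Q, hQ, hQK⟩ := Eventually.exists_gt (p := (· ∈ K)) (hKo.mem_nhds (max_rec' (· ∈ K) hv hq))
  refine exists_gt_gt_apply_eq_of_segment hJ hK hdf hu hv hPJ hQK (le_max_left u p |>.trans_lt hP)
    (le_max_left v q |>.trans_lt hQ) hz (hzp.trans ?_)
  exact apply_le_apply_of_le hJ hK hdf hJo hKo hf₁ hf₂ hp hPJ hq hQK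
    (le_max_right u p |>.trans hP.le) (le_max_right v q |>.trans hQ.le)

end Operation

section Transfer

variable {n : ℕ} {x y w lam : Fin n → ℝ} {z u v α β : ℝ}

theorem eFun_le_of_forall_le {A B C : ℝ → ℝ → ℝ} (hlam : ∀ i, 0 ≤ lam i)
    (h : ∀ i, A (w i) z ≤ α * B (x i) u + β * C (y i) v) :
    eFun A w lam z ≤ α * eFun B x lam u + β * eFun C y lam v := by
  simp only [eFun, Finset.mul_sum, ← Finset.sum_add_distrib]
  refine Finset.sum_le_sum fun i _ => ?_
  nlinarith [mul_le_mul_of_nonneg_left (h i) (hlam i)]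

theorem eFun_nrm (E : ℝ → ℝ → ℝ) (d : ℝ → ℝ) (x lam : Fin n → ℝ) (z : ℝ) :
    eFun (nrm E d) x lam z = eFun E x lam z / -d z := by
  simp only [eFun, nrm, Finset.sum_div, mul_div_assoc]

variable {E : ℝ → ℝ → ℝ} {d : ℝ → ℝ}

theorem eFun_nrm_nonpos_iff (hd : d z < 0) : eFun (nrm E d) x lam z ≤ 0 ↔ eFun E x lam z ≤ 0 := by
  rw [eFun_nrm, div_le_iff₀ (neg_pos.2 hd), zero_mul]

theorem eFun_nrm_neg_iff (hd : d z < 0) : eFun (nrm E d) x lam z < 0 ↔ eFun E x lam z < 0 := by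
  rw [eFun_nrm, div_lt_iff₀ (neg_pos.2 hd), zero_mul]

end Transfer

section Backward

variable {I J K : Set ℝ} {E F G : ℝ → ℝ → ℝ} {dE dF dG : ℝ → ℝ} {f f₁ f₂ : ℝ → ℝ → ℝ}
  {n : ℕ} {x y lam : Fin n → ℝ}
  (hIo : IsOpen I) (hJ : J.OrdConnected) (hJo : IsOpen J)
  (hK : K.OrdConnected) (hKo : IsOpen K)
  (hE : IsNormalizable I E dE) (hF : IsNormalizable J F dF) (hG : IsNormalizable K G dG)
  (hmap : ∀ u ∈ J, ∀ v ∈ K, f u v ∈ I)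
  (hdf : ∀ u ∈ J, ∀ v ∈ K, HasFDerivAt (fun p : ℝ × ℝ => f p.1 p.2)
      ((f₁ u v) • ContinuousLinearMap.fst ℝ ℝ ℝ
        + (f₂ u v) • ContinuousLinearMap.snd ℝ ℝ ℝ) (u, v))
  (hf₁ : ∀ u ∈ J, ∀ v ∈ K, 0 ≤ f₁ u v) (hf₂ : ∀ u ∈ J, ∀ v ∈ K, 0 ≤ f₂ u v)
  (hfpos : ∀ u ∈ J, ∀ v ∈ K, 0 < f₁ u v + f₂ u v)
  (hvi : ∀ p ∈ J, ∀ u ∈ J, ∀ q ∈ K, ∀ v ∈ K,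
    nrm E dE (f p q) (f u v) ≤ f₁ u v * nrm F dF p u + f₂ u v * nrm G dG q v)
  (hx : ∀ i, x i ∈ J) (hy : ∀ i, y i ∈ K) (hlam : IsWeight lam)

include hE hF hG hmap hf₁ hf₂ hvi hx hy hlam

theorem eFun_comp_nonpos_of_vi {u v : ℝ} (hu : u ∈ J) (hv : v ∈ K) (hFu : eFun F x lam u ≤ 0)
    (hGv : eFun G y lam v ≤ 0) : eFun E (fun i => f (x i) (y i)) lam (f u v) ≤ 0 := by
  obtain ⟨-, -, -, hdE, -⟩ := hE
  rw [← eFun_nrm_nonpos_iff (hdE _ (hmap u hu v hv))]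
  rw [← eFun_nrm_nonpos_iff (hF.2.2.2.1 u hu)] at hFu
  rw [← eFun_nrm_nonpos_iff (hG.2.2.2.1 v hv)] at hGv
  exact (eFun_le_of_forall_le hlam.1 fun i => hvi _ (hx i) _ hu _ (hy i) _ hv).trans
    (add_nonpos (mul_nonpos_of_nonneg_of_nonpos (hf₁ u hu v hv) hFu)
      (mul_nonpos_of_nonneg_of_nonpos (hf₂ u hu v hv) hGv))

include hfpos in
theorem eFun_comp_neg_of_vi {u v : ℝ} (hu : u ∈ J) (hv : v ∈ K) (hFu : eFun F x lam u < 0)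
    (hGv : eFun G y lam v < 0) : eFun E (fun i => f (x i) (y i)) lam (f u v) < 0 := by
  obtain ⟨-, -, -, hdE, -⟩ := hE
  rw [← eFun_nrm_neg_iff (hdE _ (hmap u hu v hv))]
  rw [← eFun_nrm_neg_iff (hF.2.2.2.1 u hu)] at hFu
  rw [← eFun_nrm_neg_iff (hG.2.2.2.1 v hv)] at hGv
  refine (eFun_le_of_forall_le hlam.1 fun i => hvi _ (hx i) _ hu _ (hy i) _ hv).trans_lt ?_
  rcases (hf₁ u hu v hv).lt_or_eq with h₁ | h₁
  · exact add_neg_of_neg_of_nonpos (mul_neg_of_pos_of_neg h₁ hFu)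
      (mul_nonpos_of_nonneg_of_nonpos (hf₂ u hu v hv) hGv.le)
  · rw [← h₁, zero_mul, zero_add]
    exact mul_neg_of_pos_of_neg (by linarith [hfpos u hu v hv]) hGv

include hJ hJo hK hKo

theorem LLD_le_of_vi :
    LLD I E (fun i => f (x i) (y i)) lam ≤ f (LLD J F x lam) (LLD K G y lam) := by
  have hu := (means_mem hJo hF.1 hx hlam hJ).1
  have hv := (means_mem hKo hG.1 hy hlam hK).1
  exact LLD_le hE.1 (fun i => hmap _ (hx i) _ (hy i)) hlam (hmap _ hu _ hv)
    (eFun_comp_nonpos_of_vi hE hF hG hmap hf₁ hf₂ hvi hx hy hlam hu hv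
      (eFun_LLD_nonpos hJo hF.1 hx hlam hJ hF.2.1) (eFun_LLD_nonpos hKo hG.1 hy hlam hK hG.2.1))

include hdf

theorem LLD_le_UUD_of_vi :
    LLD I E (fun i => f (x i) (y i)) lam ≤ f (UUD J F x lam) (UUD K G y lam) :=
  (LLD_le_of_vi hJ hJo hK hKo hE hF hG hmap hf₁ hf₂ hvi hx hy hlam).trans
    (apply_le_apply_of_le hJ hK hdf hJo hKo hf₁ hf₂ (means_mem hJo hF.1 hx hlam hJ).1
      (means_mem hJo hF.1 hx hlam hJ).2.2.2 (means_mem hKo hG.1 hy hlam hK).1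
      (means_mem hKo hG.1 hy hlam hK).2.2.2 (LLD_le_UUD hJo hF.1 hx hlam hJ)
      (LLD_le_UUD hKo hG.1 hy hlam hK))

include hfpos in
theorem LD_le_of_vi :
    LD I E (fun i => f (x i) (y i)) lam ≤ f (LD J F x lam) (LD K G y lam) := by
  have hu := (means_mem hJo hF.1 hx hlam hJ).2.1
  have hv := (means_mem hKo hG.1 hy hlam hK).2.1
  obtain ⟨s, hs, hsJ⟩ := exists_seq_tendsto_LD hJo hF.1 hx hlam
  obtain ⟨r, hr, hrK⟩ := exists_seq_tendsto_LD hKo hG.1 hy hlam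
  refine ge_of_tendsto' ((hdf _ hu _ hv).continuousAt.tendsto.comp (hs.prodMk_nhds hr)) fun k =>
    LD_le hE.1 (fun i => hmap _ (hx i) _ (hy i)) hlam (hmap _ (hsJ k).1 _ (hrK k).1) ?_
  exact eFun_comp_neg_of_vi hE hF hG hmap hf₁ hf₂ hfpos hvi hx hy hlam (hsJ k).1 (hrK k).1
    (hsJ k).2 (hrK k).2

include hIo

theorem UD_le_of_vi :
    UD I E (fun i => f (x i) (y i)) lam ≤ f (UD J F x lam) (UD K G y lam) := by
  have hw : ∀ i, f (x i) (y i) ∈ I := fun i => hmap _ (hx i) _ (hy i)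
  have hu := (means_mem hJo hF.1 hx hlam hJ).2.2.1
  have hv := (means_mem hKo hG.1 hy hlam hK).2.2.1
  refine UD_le hIo hE.1 hw hlam fun z hz hez => le_of_not_gt fun hlt => ?_
  obtain ⟨i, hi⟩ := exists_le_of_eFun_nonneg hE.1 hw hlam hz hez.le
  obtain ⟨u', hu', v', hv', huu', hvv', rfl⟩ :=
    exists_gt_gt_apply_eq hJ hK hdf hJo hKo hf₁ hf₂ hu hv (hx i) (hy i) hlt hi
  exact (eFun_comp_nonpos_of_vi hE hF hG hmap hf₁ hf₂ hvi hx hy hlam hu' hv'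
    (eFun_nonpos_of_UD_lt hF.1 hx hlam hu' huu')
    (eFun_nonpos_of_UD_lt hG.1 hy hlam hv' hvv')).not_gt hez

include hfpos in
theorem UUD_le_of_vi :
    UUD I E (fun i => f (x i) (y i)) lam ≤ f (UUD J F x lam) (UUD K G y lam) := by
  have hw : ∀ i, f (x i) (y i) ∈ I := fun i => hmap _ (hx i) _ (hy i)
  have hu := (means_mem hJo hF.1 hx hlam hJ).2.2.2
  have hv := (means_mem hKo hG.1 hy hlam hK).2.2.2
  refine UUD_le hIo hE.1 hw hlam fun z hz hez => le_of_not_gt fun hlt => ?_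
  obtain ⟨i, hi⟩ := exists_le_of_eFun_nonneg hE.1 hw hlam hz hez
  obtain ⟨u', hu', v', hv', huu', hvv', rfl⟩ :=
    exists_gt_gt_apply_eq hJ hK hdf hJo hKo hf₁ hf₂ hu hv (hx i) (hy i) hlt hi
  exact (eFun_comp_neg_of_vi hE hF hG hmap hf₁ hf₂ hfpos hvi hx hy hlam hu' hv'
    (eFun_neg_of_UUD_lt hF.1 hx hlam hu' huu')
    (eFun_neg_of_UUD_lt hG.1 hy hlam hv' hvv')).not_ge hez

end Backward
/-- Theorem: for an operation `f` nondecreasing in each variable (with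
`∂₁f + ∂₂f > 0`), the five Hölder–Minkowski-type inequalities for the four
semideviation means are all equivalent to the pointwise inequality (vi) for the
normalizations. -/
theorem statement14 (I J K : Set ℝ)
    (hI : I.OrdConnected) (hIo : IsOpen I)
    (hJ : J.OrdConnected) (hJo : IsOpen J)
    (hK : K.OrdConnected) (hKo : IsOpen K)
    (E F G : ℝ → ℝ → ℝ) (dE dF dG : ℝ → ℝ)
    (hE : IsNormalizable I E dE) (hF : IsNormalizable J F dF)
    (hG : IsNormalizable K G dG)
    (f f₁ f₂ : ℝ → ℝ → ℝ)
    (hmap : ∀ u ∈ J, ∀ v ∈ K, f u v ∈ I)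
    (hdf : ∀ u ∈ J, ∀ v ∈ K, HasFDerivAt (fun p : ℝ × ℝ => f p.1 p.2)
      ((f₁ u v) • ContinuousLinearMap.fst ℝ ℝ ℝ
        + (f₂ u v) • ContinuousLinearMap.snd ℝ ℝ ℝ) (u, v))
    (hf₁ : ∀ u ∈ J, ∀ v ∈ K, 0 ≤ f₁ u v)
    (hf₂ : ∀ u ∈ J, ∀ v ∈ K, 0 ≤ f₂ u v)
    (hfpos : ∀ u ∈ J, ∀ v ∈ K, 0 < f₁ u v + f₂ u v) :
    ((∀ (n : ℕ) (x y lam : Fin n → ℝ), (∀ i, x i ∈ J) → (∀ i, y i ∈ K) → IsWeight lam →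
        LLD I E (fun i => f (x i) (y i)) lam ≤ f (LLD J F x lam) (LLD K G y lam)) ↔
     (∀ p ∈ J, ∀ u ∈ J, ∀ q ∈ K, ∀ v ∈ K,
        nrm E dE (f p q) (f u v) ≤ f₁ u v * nrm F dF p u + f₂ u v * nrm G dG q v)) ∧
    ((∀ (n : ℕ) (x y lam : Fin n → ℝ), (∀ i, x i ∈ J) → (∀ i, y i ∈ K) → IsWeight lam →
        LD I E (fun i => f (x i) (y i)) lam ≤ f (LD J F x lam) (LD K G y lam)) ↔
     (∀ p ∈ J, ∀ u ∈ J, ∀ q ∈ K, ∀ v ∈ K,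
        nrm E dE (f p q) (f u v) ≤ f₁ u v * nrm F dF p u + f₂ u v * nrm G dG q v)) ∧
    ((∀ (n : ℕ) (x y lam : Fin n → ℝ), (∀ i, x i ∈ J) → (∀ i, y i ∈ K) → IsWeight lam →
        UD I E (fun i => f (x i) (y i)) lam ≤ f (UD J F x lam) (UD K G y lam)) ↔
     (∀ p ∈ J, ∀ u ∈ J, ∀ q ∈ K, ∀ v ∈ K,
        nrm E dE (f p q) (f u v) ≤ f₁ u v * nrm F dF p u + f₂ u v * nrm G dG q v)) ∧
    ((∀ (n : ℕ) (x y lam : Fin n → ℝ), (∀ i, x i ∈ J) → (∀ i, y i ∈ K) → IsWeight lam →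
        UUD I E (fun i => f (x i) (y i)) lam ≤ f (UUD J F x lam) (UUD K G y lam)) ↔
     (∀ p ∈ J, ∀ u ∈ J, ∀ q ∈ K, ∀ v ∈ K,
        nrm E dE (f p q) (f u v) ≤ f₁ u v * nrm F dF p u + f₂ u v * nrm G dG q v)) ∧
    ((∀ (n : ℕ) (x y lam : Fin n → ℝ), (∀ i, x i ∈ J) → (∀ i, y i ∈ K) → IsWeight lam →
        LLD I E (fun i => f (x i) (y i)) lam ≤ f (UUD J F x lam) (UUD K G y lam)) ↔
     (∀ p ∈ J, ∀ u ∈ J, ∀ q ∈ K, ∀ v ∈ K,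
        nrm E dE (f p q) (f u v) ≤ f₁ u v * nrm F dF p u + f₂ u v * nrm G dG q v)) := by
  refine ⟨⟨nrm_le_of_means_le (hasTwoPointSlope_LLD hI hIo hE) (hasTwoPointSlope_LLD hJ hJo hF)
        (hasTwoPointSlope_LLD hK hKo hG) hmap hdf, fun hvi _ _ _ _ hx hy hlam =>
        LLD_le_of_vi hJ hJo hK hKo hE hF hG hmap hf₁ hf₂ hvi hx hy hlam⟩,
      ⟨nrm_le_of_means_le (hasTwoPointSlope_LD hI hIo hE) (hasTwoPointSlope_LD hJ hJo hF)
        (hasTwoPointSlope_LD hK hKo hG) hmap hdf, fun hvi _ _ _ _ hx hy hlam =>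
        LD_le_of_vi hJ hJo hK hKo hE hF hG hmap hdf hf₁ hf₂ hfpos hvi hx hy hlam⟩,
      ⟨nrm_le_of_means_le (hasTwoPointSlope_UD hI hIo hE) (hasTwoPointSlope_UD hJ hJo hF)
        (hasTwoPointSlope_UD hK hKo hG) hmap hdf, fun hvi _ _ _ _ hx hy hlam =>
        UD_le_of_vi hIo hJ hJo hK hKo hE hF hG hmap hdf hf₁ hf₂ hvi hx hy hlam⟩,
      ⟨nrm_le_of_means_le (hasTwoPointSlope_UUD hI hIo hE) (hasTwoPointSlope_UUD hJ hJo hF)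
        (hasTwoPointSlope_UUD hK hKo hG) hmap hdf, fun hvi _ _ _ _ hx hy hlam =>
        UUD_le_of_vi hIo hJ hJo hK hKo hE hF hG hmap hdf hf₁ hf₂ hfpos hvi hx hy hlam⟩,
      ⟨nrm_le_of_means_le (hasTwoPointSlope_LLD hI hIo hE) (hasTwoPointSlope_UUD hJ hJo hF)
        (hasTwoPointSlope_UUD hK hKo hG) hmap hdf, fun hvi _ _ _ _ hx hy hlam =>
        LLD_le_UUD_of_vi hJ hJo hK hKo hE hF hG hmap hdf hf₁ hf₂ hvi hx hy hlam⟩⟩
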